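/- The vector u_{−s−2} := F^{s+1}(u_s) in the tensor product model M is nonzero, satisfies H(u_{−s−2}) = (−s−2)·u_{−s−2} and E(u_{−s−2}) = 0, and all of its coefficients in the basis {v_i ⊗ w_k} are nonnegative integers, supported on pairs (i,k) with i + k = (n+s+2)/2. -/

import Mathlib

/-- The tensor product model `M` of `L_n ⊗ V_0`: finitely supported functions on
`{0,…,n} × ℕ`, with standard basis vectors `v_i ⊗ w_k`. -/
abbrev TM (n : ℕ) : Type := (Fin (n + 1) × ℕ) →₀ ℂ

/-- The basis vector `v_i ⊗ w_k` of `M`, with the convention that it is `0`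
whenever `i < 0`, `i > n` or `k < 0`. -/
noncomputable def bv (n : ℕ) (i k : ℤ) : TM n :=
  if h : 0 ≤ i ∧ i < (n : ℤ) + 1 ∧ 0 ≤ k then
    Finsupp.single (⟨i.toNat, by omega⟩, k.toNat) (1 : ℂ)
  else 0

/-- The coefficient of `v_i ⊗ w_k` in `u`, interpreted as `0` for out-of-range
indices. -/
noncomputable def cf (n : ℕ) (u : TM n) (i k : ℤ) : ℂ :=
  if h : 0 ≤ i ∧ i < (n : ℤ) + 1 ∧ 0 ≤ k then u (⟨i.toNat, by omega⟩, k.toNat) else 0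

/-- `F(v_i ⊗ w_k) = (i+1)·v_{i+1} ⊗ w_k + v_i ⊗ w_{k+1}`. -/
noncomputable def FM (n : ℕ) : Module.End ℂ (TM n) :=
  Finsupp.lsum ℂ fun p => LinearMap.toSpanSingleton ℂ (TM n)
    ((((p.1 : ℕ) : ℂ) + 1) • bv n (((p.1 : ℕ) : ℤ) + 1) ((p.2 : ℤ)) +
      bv n ((p.1 : ℕ) : ℤ) ((p.2 : ℤ) + 1))

/-- `E(v_i ⊗ w_k) = (n-i+1)·v_{i-1} ⊗ w_k - k(k-1)·v_i ⊗ w_{k-1}`. -/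
noncomputable def EM (n : ℕ) : Module.End ℂ (TM n) :=
  Finsupp.lsum ℂ fun p => LinearMap.toSpanSingleton ℂ (TM n)
    (((n : ℂ) - ((p.1 : ℕ) : ℂ) + 1) • bv n (((p.1 : ℕ) : ℤ) - 1) ((p.2 : ℤ)) -
      (((p.2 : ℕ) : ℂ) * (((p.2 : ℕ) : ℂ) - 1)) • bv n ((p.1 : ℕ) : ℤ) ((p.2 : ℤ) - 1))

/-- `H(v_i ⊗ w_k) = (n-2i-2k)·v_i ⊗ w_k`. -/
noncomputable def HM (n : ℕ) : Module.End ℂ (TM n) :=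
  Finsupp.lsum ℂ fun p => LinearMap.toSpanSingleton ℂ (TM n)
    (((n : ℂ) - 2 * ((p.1 : ℕ) : ℂ) - 2 * ((p.2 : ℕ) : ℂ)) • bv n ((p.1 : ℕ) : ℤ) ((p.2 : ℤ)))

/-- With `r = -s-2` and `m = (n+r)/2`, the rational number
`p_i = 4^{m-i} · (n+r+2)/(n+r-2i+2) · ∏_{j=0}^{i-1} (n+r-2j)² · ∏_{ν=i}^{m-1} (n-ν)`,
where an empty product equals `1`. -/
noncomputable def pcoef (n s m i : ℕ) : ℚ :=
  (4 : ℚ) ^ (m - i) *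
    (((n : ℚ) + (-(s : ℚ) - 2) + 2) / ((n : ℚ) + (-(s : ℚ) - 2) - 2 * (i : ℚ) + 2)) *
    (∏ j ∈ Finset.range i, ((n : ℚ) + (-(s : ℚ) - 2) - 2 * (j : ℚ)) ^ 2) *
    (∏ ν ∈ Finset.Ico i m, ((n : ℚ) - (ν : ℚ)))

/-!
The operators satisfy the `sl₂` relations `[E,F] = H`, `[H,E] = 2E`, `[H,F] = -2F`. Clearing
denominators, `p_j = 4^m (m+1)(m)⋯(m+2-j) · m(m-1)⋯(m+1-j) · ∏_{ν=j}^{m-1} (n-ν)` is a natural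
number with `(n-j) p_{j+1} = (m+1-j)(m-j) p_j`, which is exactly `E u_s = 0`; and `H u_s = s u_s`
because `u_s` lies on the antidiagonal `i + k = m + 1`. Mathlib's `sl₂` computations for a primitive
vector of weight `s` then give `H F^{s+1} u_s = (-s-2) F^{s+1} u_s` and
`E F^{s+1} u_s = (s+1)(s-s) F^s u_s = 0`. The rest is read off from the formula for `F`: it has
coefficients in `ℕ`, raises `i + k` by one, and on the column `i = 0` it only shifts `k`, so the
coefficient of `v_0 ⊗ w_{m+s+2}` in `F^{s+1} u_s` is `p_0 ≠ 0`.
-/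

attribute [local instance] LieRing.ofAssociativeRing

section Coefficients

variable {n : ℕ}

lemma cf_zero (i k : ℤ) : cf n 0 i k = 0 := by
  unfold cf; split_ifs <;> simp

lemma cf_add (u v : TM n) (i k : ℤ) : cf n (u + v) i k = cf n u i k + cf n v i k := by
  unfold cf; split_ifs <;> simp

lemma cf_neg (u : TM n) (i k : ℤ) : cf n (-u) i k = -cf n u i k := by
  unfold cf; split_ifs <;> simp

lemma cf_sub (u v : TM n) (i k : ℤ) : cf n (u - v) i k = cf n u i k - cf n v i k := by
  unfold cf; split_ifs <;> simp

lemma cf_smul (c : ℂ) (u : TM n) (i k : ℤ) : cf n (c • u) i k = c * cf n u i k := by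
  unfold cf; split_ifs <;> simp

lemma cf_sum {ι : Type*} (s : Finset ι) (f : ι → TM n) (i k : ℤ) :
    cf n (∑ j ∈ s, f j) i k = ∑ j ∈ s, cf n (f j) i k := by
  unfold cf; split_ifs <;> simp

lemma cf_of_out_of_range (u : TM n) {i k : ℤ} (h : ¬(0 ≤ i ∧ i < (n : ℤ) + 1 ∧ 0 ≤ k)) :
    cf n u i k = 0 :=
  dif_neg h

lemma cf_natCast (u : TM n) (a : Fin (n + 1)) (b : ℕ) : cf n u (a : ℕ) b = u (a, b) := by
  rw [cf, dif_pos (by omega)]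
  simp

lemma ext_cf {u v : TM n} (h : ∀ i k : ℤ, cf n u i k = cf n v i k) : u = v := by
  ext ⟨a, b⟩
  rw [← cf_natCast, ← cf_natCast, h]

lemma cf_bv (x y i k : ℤ) :
    cf n (bv n x y) i k = if i = x ∧ k = y ∧ 0 ≤ x ∧ x < (n : ℤ) + 1 ∧ 0 ≤ y then 1 else 0 := by
  unfold cf bv
  split_ifs <;> simp [Finsupp.single_apply, Fin.ext_iff] <;> omega

lemma single_eq_smul_bv (a : Fin (n + 1)) (b : ℕ) (c : ℂ) :
    Finsupp.single (a, b) c = c • bv n (a : ℕ) b := by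
  rw [bv, dif_pos (by omega), Finsupp.smul_single_one]
  simp

end Coefficients

section Operators

variable {n : ℕ}

lemma FM_bv (a : Fin (n + 1)) (b : ℕ) :
    FM n (bv n (a : ℕ) b) = ((a : ℕ) + 1 : ℂ) • bv n ((a : ℕ) + 1) b + bv n (a : ℕ) (b + 1) := by
  conv_lhs => rw [← one_smul ℂ (bv n _ _), ← single_eq_smul_bv]
  rw [FM, Finsupp.lsum_single, LinearMap.toSpanSingleton_apply, one_smul]

lemma EM_bv (a : Fin (n + 1)) (b : ℕ) :
    EM n (bv n (a : ℕ) b) = ((n : ℂ) - (a : ℕ) + 1) • bv n ((a : ℕ) - 1) b -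
      ((b : ℂ) * ((b : ℂ) - 1)) • bv n (a : ℕ) ((b : ℤ) - 1) := by
  conv_lhs => rw [← one_smul ℂ (bv n _ _), ← single_eq_smul_bv]
  rw [EM, Finsupp.lsum_single, LinearMap.toSpanSingleton_apply, one_smul]

lemma HM_bv (a : Fin (n + 1)) (b : ℕ) :
    HM n (bv n (a : ℕ) b) = ((n : ℂ) - 2 * (a : ℕ) - 2 * b) • bv n (a : ℕ) b := by
  conv_lhs => rw [← one_smul ℂ (bv n _ _), ← single_eq_smul_bv]
  rw [HM, Finsupp.lsum_single, LinearMap.toSpanSingleton_apply, one_smul]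

lemma cf_FM (u : TM n) {i : ℤ} (hi : i ≤ n) (k : ℤ) :
    cf n (FM n u) i k = i * cf n u (i - 1) k + cf n u i (k - 1) := by
  induction u using Finsupp.induction_linear with
  | zero => simp [cf_zero]
  | add u v hu hv => simp only [map_add, cf_add, hu, hv]; ring
  | single p c =>
    obtain ⟨a, b⟩ := p
    simp only [single_eq_smul_bv, map_smul, FM_bv, cf_smul, cf_add, cf_bv]
    split_ifs with h₁ <;> try omega
    all_goals first | ring1 | (obtain ⟨rfl, -⟩ := h₁; push_cast; ring)

lemma cf_EM (u : TM n) {i : ℤ} (hi : 0 ≤ i) (k : ℤ) :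
    cf n (EM n u) i k = (n - i) * cf n u (i + 1) k - (k + 1) * k * cf n u i (k + 1) := by
  induction u using Finsupp.induction_linear with
  | zero => simp [cf_zero]
  | add u v hu hv => simp only [map_add, cf_add, hu, hv]; ring
  | single p c =>
    obtain ⟨a, b⟩ := p
    simp only [single_eq_smul_bv, map_smul, EM_bv, cf_smul, cf_sub, cf_bv]
    split_ifs <;> try omega
    all_goals first
      | ring1
      | (obtain ⟨rfl, rfl, -⟩ := ‹i = _ ∧ k = _ ∧ _›; push_cast; ring1)
      | (obtain rfl : k = -1 := (by omega); push_cast; ring1)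

lemma cf_HM (u : TM n) (i k : ℤ) :
    cf n (HM n u) i k = (n - 2 * i - 2 * k) * cf n u i k := by
  induction u using Finsupp.induction_linear with
  | zero => simp [cf_zero]
  | add u v hu hv => simp only [map_add, cf_add, hu, hv]; ring
  | single p c =>
    obtain ⟨a, b⟩ := p
    simp only [single_eq_smul_bv, map_smul, HM_bv, cf_smul, cf_bv]
    split_ifs with h₁ <;> try omega
    all_goals first | ring1 | (obtain ⟨rfl, rfl, -⟩ := h₁; push_cast; ring)

lemma commutator_HM_FM : HM n * FM n - FM n * HM n = -(2 • FM n) := by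
  refine LinearMap.ext fun u => ext_cf fun i k => ?_
  simp only [LinearMap.sub_apply, LinearMap.neg_apply, two_nsmul, LinearMap.add_apply,
    Module.End.mul_apply, cf_sub, cf_neg, cf_add]
  by_cases hi : i ≤ n
  · rw [cf_HM, cf_FM _ hi, cf_FM _ hi, cf_HM, cf_HM]
    push_cast
    ring
  · simp only [cf_of_out_of_range _ (show ¬(0 ≤ i ∧ i < (n : ℤ) + 1 ∧ 0 ≤ k) by omega)]
    ring

lemma commutator_HM_EM : HM n * EM n - EM n * HM n = 2 • EM n := by
  refine LinearMap.ext fun u => ext_cf fun i k => ?_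
  simp only [LinearMap.sub_apply, two_nsmul, LinearMap.add_apply, Module.End.mul_apply, cf_sub,
    cf_add]
  by_cases hi : 0 ≤ i
  · rw [cf_HM, cf_EM _ hi, cf_EM _ hi, cf_HM, cf_HM]
    push_cast
    ring
  · simp only [cf_of_out_of_range _ (show ¬(0 ≤ i ∧ i < (n : ℤ) + 1 ∧ 0 ≤ k) by omega)]
    ring

lemma commutator_EM_FM : EM n * FM n - FM n * EM n = HM n := by
  refine LinearMap.ext fun u => ext_cf fun i k => ?_
  simp only [LinearMap.sub_apply, Module.End.mul_apply, cf_sub]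
  by_cases hi : 0 ≤ i ∧ i ≤ n
  · -- `cf_FM` at `i + 1` and `cf_EM` at `i - 1` fail at the edges, where the prefactor vanishes
    have hF : ((n : ℂ) - i) * cf n (FM n u) (i + 1) k =
        (n - i) * ((i + 1) * cf n u i k + cf n u (i + 1) (k - 1)) := by
      rcases hi.2.lt_or_eq with hin | rfl
      · rw [cf_FM _ (by omega), add_sub_cancel_right]
        push_cast
        ring
      · push_cast
        ring
    have hE : (i : ℂ) * cf n (EM n u) (i - 1) k =
        i * ((n - i + 1) * cf n u i k - (k + 1) * k * cf n u (i - 1) (k + 1)) := by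
      rcases hi.1.lt_or_eq with hi0 | rfl
      · rw [cf_EM _ (by omega), sub_add_cancel]
        push_cast
        ring
      · push_cast
        ring
    rw [cf_EM _ hi.1, cf_FM _ hi.2, cf_FM _ hi.2, cf_EM _ hi.1, cf_HM, hF, hE,
      add_sub_cancel_right, sub_add_cancel]
    push_cast
    ring
  · simp only [cf_of_out_of_range _ (show ¬(0 ≤ i ∧ i < (n : ℤ) + 1 ∧ 0 ≤ k) by omega)]
    ring

lemma HM_ne_zero : HM n ≠ 0 := by
  intro h
  have hc := congrArg (fun T : Module.End ℂ (TM n) => cf n (T (bv n 0 (n + 1))) 0 (n + 1)) h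
  rw [LinearMap.zero_apply, cf_zero, cf_HM, cf_bv, if_pos ⟨rfl, rfl, le_rfl, by omega, by omega⟩,
    mul_one] at hc
  have : ((n + 2 : ℕ) : ℂ) = 0 := by push_cast at hc ⊢; linear_combination -hc
  exact Nat.cast_ne_zero.2 (by omega) this

lemma isSl2Triple_HM_EM_FM : IsSl2Triple (HM n) (EM n) (FM n) :=
  ⟨HM_ne_zero, commutator_EM_FM, commutator_HM_EM, commutator_HM_FM⟩

lemma toEnd_FM : LieModule.toEnd ℂ (Module.End ℂ (TM n)) (TM n) (FM n) = FM n := by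
  simp

lemma HM_pow_FM_apply {u : TM n} {μ : ℂ}
    (P : (isSl2Triple_HM_EM_FM (n := n)).HasPrimitiveVectorWith u μ) (t : ℕ) :
    HM n ((FM n ^ t) u) = (μ - 2 * t) • (FM n ^ t) u := by
  simpa only [toEnd_FM, Module.End.lie_apply] using P.lie_h_pow_toEnd_f t

lemma EM_pow_FM_apply_succ {u : TM n} {μ : ℂ}
    (P : (isSl2Triple_HM_EM_FM (n := n)).HasPrimitiveVectorWith u μ) (t : ℕ) :
    EM n ((FM n ^ (t + 1)) u) = ((t + 1) * (μ - t)) • (FM n ^ t) u := by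
  simpa only [toEnd_FM, Module.End.lie_apply] using P.lie_e_pow_succ_toEnd_f t

end Operators

section Iterates

variable {n : ℕ}

lemma exists_natCast_cf_pow_FM {u : TM n} (hu : ∀ i k : ℤ, ∃ N : ℕ, cf n u i k = N) (t : ℕ)
    (i k : ℤ) : ∃ N : ℕ, cf n ((FM n ^ t) u) i k = N := by
  induction t generalizing i k with
  | zero => exact hu i k
  | succ t ih =>
    by_cases hi : 0 ≤ i ∧ i ≤ n
    · obtain ⟨N₁, h₁⟩ := ih (i - 1) k
      obtain ⟨N₂, h₂⟩ := ih i (k - 1)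
      lift i to ℕ using hi.1
      refine ⟨i * N₁ + N₂, ?_⟩
      rw [pow_succ', Module.End.mul_apply, cf_FM _ hi.2, h₁, h₂]
      push_cast
      ring
    · exact ⟨0, by rw [cf_of_out_of_range _ (by omega), Nat.cast_zero]⟩

lemma add_eq_of_cf_pow_FM_ne_zero {u : TM n} {d : ℤ}
    (hu : ∀ i k : ℤ, cf n u i k ≠ 0 → i + k = d) (t : ℕ) {i k : ℤ}
    (h : cf n ((FM n ^ t) u) i k ≠ 0) : i + k = d + t := by
  induction t generalizing i k with
  | zero => simpa using hu i k h
  | succ t ih =>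
    have hi : 0 ≤ i ∧ i < (n : ℤ) + 1 ∧ 0 ≤ k := by
      by_contra hi
      exact h (cf_of_out_of_range _ hi)
    rw [pow_succ', Module.End.mul_apply, cf_FM _ (by omega)] at h
    by_cases h₁ : cf n ((FM n ^ t) u) (i - 1) k = 0
    · rw [h₁, mul_zero, zero_add] at h
      have := ih h
      push_cast
      omega
    · have := ih h₁
      push_cast
      omega

lemma cf_pow_FM_zero (u : TM n) (t : ℕ) (k : ℤ) :
    cf n ((FM n ^ t) u) 0 (k + t) = cf n u 0 k := by
  induction t with
  | zero => simp
  | succ t ih =>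
    rw [pow_succ', Module.End.mul_apply, cf_FM _ (by omega), Nat.cast_succ, ← add_assoc,
      add_sub_cancel_right, ih]
    simp

lemma pow_FM_apply_ne_zero {u : TM n} {k : ℤ} (h : cf n u 0 k ≠ 0) (t : ℕ) :
    (FM n ^ t) u ≠ 0 :=
  fun h₀ => h (by rw [← cf_pow_FM_zero u t k, h₀, cf_zero])

end Iterates

section Antidiagonal

variable {n m : ℕ}

noncomputable def antidiagVec (n m : ℕ) (c : ℕ → ℂ) : TM n :=
  ∑ j ∈ Finset.range (m + 1), c j • bv n j ((m : ℤ) + 1 - j)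

lemma cf_antidiagVec (hm : m ≤ n) (c : ℕ → ℂ) (i k : ℤ) :
    cf n (antidiagVec n m c) i k = if 0 ≤ i ∧ i ≤ m ∧ i + k = m + 1 then c i.toNat else 0 := by
  simp only [antidiagVec, cf_sum, cf_smul, cf_bv, mul_ite, mul_one, mul_zero]
  split_ifs with h
  · rw [Finset.sum_eq_single_of_mem i.toNat (by simp; omega)]
    · rw [if_pos (by omega)]
    · intro j _ hj
      rw [if_neg (by omega)]
  · refine Finset.sum_eq_zero fun j hj => if_neg ?_
    rw [Finset.mem_range] at hj
    omega

lemma exists_natCast_cf_antidiagVec (hm : m ≤ n) (c : ℕ → ℕ) (i k : ℤ) :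
    ∃ N : ℕ, cf n (antidiagVec n m fun j => c j) i k = N := by
  rw [cf_antidiagVec hm]
  split_ifs
  exacts [⟨_, rfl⟩, ⟨0, Nat.cast_zero.symm⟩]

lemma add_eq_of_cf_antidiagVec_ne_zero (hm : m ≤ n) (c : ℕ → ℂ) {i k : ℤ}
    (h : cf n (antidiagVec n m c) i k ≠ 0) : i + k = m + 1 := by
  rw [cf_antidiagVec hm] at h
  split_ifs at h with hik
  exacts [hik.2.2, absurd rfl h]

lemma HM_antidiagVec (hm : m ≤ n) (c : ℕ → ℂ) :
    HM n (antidiagVec n m c) = ((n : ℂ) - 2 * (m + 1)) • antidiagVec n m c := by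
  refine ext_cf fun i k => ?_
  rw [cf_HM, cf_smul, cf_antidiagVec hm]
  split_ifs with h
  · have hik : (i : ℂ) + k = m + 1 := by exact_mod_cast h.2.2
    linear_combination (-2 * c i.toNat) * hik
  · ring

lemma EM_antidiagVec (hm : m ≤ n) {c : ℕ → ℂ}
    (hc : ∀ j < m, ((n : ℂ) - j) * c (j + 1) = ((m : ℂ) + 1 - j) * (m - j) * c j) :
    EM n (antidiagVec n m c) = 0 := by
  refine ext_cf fun i k => ?_
  rw [cf_zero]
  by_cases hi : 0 ≤ i
  · rw [cf_EM _ hi, cf_antidiagVec hm, cf_antidiagVec hm]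
    by_cases hk : i + k = m ∧ i < m
    · lift i to ℕ using hi
      obtain rfl : k = m - i := by omega
      rw [if_pos (by omega), if_pos (by omega), show ((i : ℤ) + 1).toNat = i + 1 by omega,
        Int.toNat_natCast]
      push_cast
      linear_combination hc i (by omega)
    · split_ifs
      · omega
      · omega
      · obtain rfl : k = 0 := by omega
        simp
      · simp
  · exact cf_of_out_of_range _ (by omega)

end Antidiagonal

def pcoefNat (n m i : ℕ) : ℕ :=
  4 ^ m * (m + 1).descFactorial i * m.descFactorial i * ∏ ν ∈ Finset.Ico i m, (n - ν)

lemma pcoefNat_zero_pos {n m : ℕ} (hm : m ≤ n) : 0 < pcoefNat n m 0 := by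
  have : 0 < ∏ ν ∈ Finset.Ico 0 m, (n - ν) :=
    Finset.prod_pos fun ν hν => by rw [Finset.mem_Ico] at hν; omega
  simp only [pcoefNat, Nat.descFactorial_zero]
  positivity

lemma pcoefNat_succ_mul (n m : ℕ) {j : ℕ} (hj : j < m) :
    pcoefNat n m (j + 1) * (n - j) = pcoefNat n m j * ((m + 1 - j) * (m - j)) := by
  rw [pcoefNat, pcoefNat, Nat.descFactorial_succ, Nat.descFactorial_succ,
    Finset.prod_eq_prod_Ico_succ_bot hj]
  ring

lemma prod_range_two_mul_sub {R : Type*} [CommRing R] {m i : ℕ} (hi : i ≤ m) :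
    ∏ j ∈ Finset.range i, (2 * (m : R) - 2 * j) = 2 ^ i * m.descFactorial i := by
  rw [Nat.descFactorial_eq_prod_range, Nat.cast_prod, Finset.pow_eq_prod_const,
    ← Finset.prod_mul_distrib]
  refine Finset.prod_congr rfl fun j hj => ?_
  rw [Nat.cast_sub ((Finset.mem_range.1 hj).le.trans hi)]
  ring

lemma pcoef_eq_pcoefNat {n s m i : ℕ} (hm : n = s + 2 + 2 * m) (hi : i ≤ m) :
    pcoef n s m i = pcoefNat n m i := by
  have h2m : (n : ℚ) + (-(s : ℚ) - 2) = 2 * m := by rw [hm]; push_cast; ring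
  have hprod : ∏ ν ∈ Finset.Ico i m, ((n : ℚ) - ν) = (∏ ν ∈ Finset.Ico i m, (n - ν) : ℕ) := by
    rw [Nat.cast_prod]
    exact Finset.prod_congr rfl fun ν hν => by
      rw [Nat.cast_sub (by rw [Finset.mem_Ico] at hν; omega)]
  have hdesc : ((m + 1).descFactorial i : ℚ) * (m + 1 - i) = (m + 1) * m.descFactorial i := by
    have := congrArg (Nat.cast : ℕ → ℚ) (Nat.succ_descFactorial_succ m i)
    push_cast [Nat.descFactorial_succ, Nat.cast_sub (by omega : i ≤ m + 1)] at this
    linear_combination this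
  have hpow : (4 : ℚ) ^ m = 4 ^ (m - i) * (2 ^ i) ^ 2 := by
    rw [← pow_mul, mul_comm i 2, pow_mul, show (2 : ℚ) ^ 2 = 4 by norm_num, ← pow_add,
      Nat.sub_add_cancel hi]
  have hne : (m : ℚ) - i + 1 ≠ 0 := by
    have : (i : ℚ) ≤ m := by exact_mod_cast hi
    linarith
  rw [pcoef, pcoefNat, h2m, Finset.prod_pow, prod_range_two_mul_sub (R := ℚ) hi, hprod]
  push_cast
  field_simp
  rw [hpow]
  linear_combination -(4 ^ (m - i) * (2 ^ i) ^ 2 * (m.descFactorial i : ℚ) *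
    ∏ ν ∈ Finset.Ico i m, ((n - ν : ℕ) : ℚ)) * hdesc

lemma sum_pcoef_smul_bv {n s m : ℕ} (hm : n = s + 2 + 2 * m) :
    ∑ j ∈ Finset.range (m + 1), ((pcoef n s m j : ℂ)) • bv n (j : ℤ) ((m : ℤ) + 1 - (j : ℤ)) =
      antidiagVec n m fun j => pcoefNat n m j :=
  Finset.sum_congr rfl fun j hj => by
    rw [pcoef_eq_pcoefNat hm (Finset.mem_range_succ_iff.1 hj), Rat.cast_natCast]

lemma cf_antidiagVec_pcoefNat_ne_zero {n m : ℕ} (hm : m ≤ n) :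
    cf n (antidiagVec n m fun j => pcoefNat n m j) 0 (m + 1) ≠ 0 := by
  rw [cf_antidiagVec hm, if_pos (by omega)]
  exact_mod_cast (pcoefNat_zero_pos hm).ne'

lemma hasPrimitiveVectorWith_antidiagVec_pcoefNat {n s m : ℕ} (hm : n = s + 2 + 2 * m) :
    (isSl2Triple_HM_EM_FM (n := n)).HasPrimitiveVectorWith
      (antidiagVec n m fun j => pcoefNat n m j) (s : ℂ) := by
  have hmn : m ≤ n := by omega
  refine ⟨pow_FM_apply_ne_zero (cf_antidiagVec_pcoefNat_ne_zero hmn) 0, ?_, ?_⟩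
  · rw [Module.End.lie_apply, HM_antidiagVec hmn, hm]
    congr 1
    push_cast
    ring
  · refine EM_antidiagVec hmn fun j hj => ?_
    have := congrArg (Nat.cast : ℕ → ℂ) (pcoefNat_succ_mul n m hj)
    push_cast [Nat.cast_sub (show j ≤ n by omega), Nat.cast_sub (show j ≤ m + 1 by omega),
      Nat.cast_sub hj.le] at this
    linear_combination this

theorem stmt16_general (n s m : ℕ) (hm : n = s + 2 + 2 * m) :
    let us : TM n := ∑ j ∈ Finset.range (m + 1),
      ((pcoef n s m j : ℂ)) • bv n (j : ℤ) ((m : ℤ) + 1 - (j : ℤ));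
    let ums : TM n := (FM n ^ (s + 1)) us;
    ums ≠ 0 ∧
    HM n ums = (-(s : ℂ) - 2) • ums ∧
    EM n ums = 0 ∧
    (∀ p : Fin (n + 1) × ℕ, ∃ N : ℕ, ums p = (N : ℂ)) ∧
    (∀ (i : Fin (n + 1)) (k : ℕ), ums (i, k) ≠ 0 → (i : ℕ) + k = (n + s + 2) / 2) := by
  have hmn : m ≤ n := by omega
  simp only [sum_pcoef_smul_bv hm]
  have P := hasPrimitiveVectorWith_antidiagVec_pcoefNat hm
  refine ⟨pow_FM_apply_ne_zero (cf_antidiagVec_pcoefNat_ne_zero hmn) _, ?_, ?_,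
    fun ⟨i, k⟩ => ?_, fun i k h => ?_⟩
  · rw [HM_pow_FM_apply P]
    congr 1
    push_cast
    ring
  · rw [EM_pow_FM_apply_succ P, sub_self, mul_zero, zero_smul]
  · simpa only [cf_natCast] using
      exists_natCast_cf_pow_FM (exists_natCast_cf_antidiagVec hmn _) (s + 1) (i : ℕ) k
  · have := add_eq_of_cf_pow_FM_ne_zero
      (fun _ _ => add_eq_of_cf_antidiagVec_ne_zero hmn _) (s + 1)
      (i := (i : ℕ)) (k := k) (by rwa [cf_natCast])
    omega

/-- Fix `n ≥ 2`, `0 ≤ s ≤ n-2` with `n - s` even, `r = -s-2`, `m = (n+r)/2`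
(encoded by `n = s + 2 + 2m`), and let
`u_s = Σ_{j=0}^{m} p_j · (v_j ⊗ w_{m+1-j})` be the highest weight vector of
weight `s` in the tensor product model `M` of `L_n ⊗ V_0`.  Then
`u_{-s-2} = F^{s+1}(u_s)` is nonzero, satisfies `H(u_{-s-2}) = (-s-2)·u_{-s-2}`
and `E(u_{-s-2}) = 0`, and all of its coefficients in the basis `{v_i ⊗ w_k}`
are nonnegative integers, supported on pairs `(i,k)` with
`i + k = (n+s+2)/2`. -/
theorem stmt16 (n s m : ℕ) (hn : 2 ≤ n) (hm : n = s + 2 + 2 * m) :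
    let us : TM n := ∑ j ∈ Finset.range (m + 1),
      ((pcoef n s m j : ℂ)) • bv n (j : ℤ) ((m : ℤ) + 1 - (j : ℤ));
    let ums : TM n := (FM n ^ (s + 1)) us;
    ums ≠ 0 ∧
    HM n ums = (-(s : ℂ) - 2) • ums ∧
    EM n ums = 0 ∧
    (∀ p : Fin (n + 1) × ℕ, ∃ N : ℕ, ums p = (N : ℂ)) ∧
    (∀ (i : Fin (n + 1)) (k : ℕ), ums (i, k) ≠ 0 → (i : ℕ) + k = (n + s + 2) / 2) :=
  stmt16_general n s m hm
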